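/- The arrival time of the coasting bead on the quadratic path equals the stated integral: suppose x : [0,T] → ℝ is differentiable with x(0) = 0, x(T) = x_f, and for every t ∈ [0,T], ẋ(t) = √(2E − 2g·(a·x(t)² + b·x(t))) / √(1 + (2a·x(t) + b)²). Then T = ∫₀^{x_f} √( (1+(2aξ+b)²) / (2E − 2g(aξ² + bξ)) ) dξ. -/

import Mathlib

/-!
Along a solution the speed `ẋ = v(x)` is positive, so `x` increases from `0` to `x_f` and
the substitution `ξ = x(t)` turns `∫₀^{x_f} dξ / v(ξ)` into `∫₀^T ẋ(t) / v(x(t)) dt = T`.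
-/

open Set intervalIntegral

lemma monotoneOn_of_forall_hasDerivAt_nonneg {D : Set ℝ} (hD : Convex ℝ D) {f f' : ℝ → ℝ}
    (hf : ∀ t ∈ D, HasDerivAt f (f' t) t) (hf' : ∀ t ∈ D, 0 ≤ f' t) : MonotoneOn f D :=
  monotoneOn_of_hasDerivWithinAt_nonneg hD
    (fun t ht ↦ (hf t ht).continuousAt.continuousWithinAt)
    (fun t ht ↦ (hf t (interior_subset ht)).hasDerivWithinAt)
    (fun t ht ↦ hf' t (interior_subset ht))

theorem integral_eq_sub_of_hasDerivAt_of_mul_eq_one {x v f : ℝ → ℝ} {s : Set ℝ} {t₀ t₁ : ℝ}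
    (hx : ∀ t ∈ uIcc t₀ t₁, HasDerivAt x (v (x t)) t) (hmaps : MapsTo x (uIcc t₀ t₁) s)
    (hv : ContinuousOn v s) (hf : ContinuousOn f s) (hfv : ∀ ξ ∈ s, f ξ * v ξ = 1) :
    ∫ ξ in x t₀..x t₁, f ξ = t₁ - t₀ := by
  have hxc : ContinuousOn x (uIcc t₀ t₁) := fun t ht ↦ (hx t ht).continuousAt.continuousWithinAt
  calc ∫ ξ in x t₀..x t₁, f ξ = ∫ t in t₀..t₁, (f ∘ x) t * v (x t) :=
        (integral_comp_mul_deriv' hx (hv.comp hxc hmaps) (hf.mono hmaps.image_subset)).symm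
    _ = ∫ _ in t₀..t₁, (1 : ℝ) := integral_congr fun t ht ↦ hfv (x t) (hmaps ht)
    _ = t₁ - t₀ := by simp

lemma Real.sqrt_div_mul_sqrt_div_eq_one {p q : ℝ} (hp : 0 < p) (hq : 0 < q) :
    √(p / q) * (√q / √p) = 1 := by
  have hp' : √p ≠ 0 := (Real.sqrt_pos.2 hp).ne'
  have hq' : √q ≠ 0 := (Real.sqrt_pos.2 hq).ne'
  rw [Real.sqrt_div hp.le]
  field_simp

theorem bead_arrival_time_general (a b g E x_f T : ℝ) (hT : 0 < T)
    (hpos : ∀ ξ ∈ Set.Icc (0 : ℝ) x_f, 0 < 2 * E - 2 * g * (a * ξ ^ 2 + b * ξ))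
    (x : ℝ → ℝ) (hx0 : x 0 = 0) (hxT : x T = x_f)
    (hode : ∀ t ∈ Set.Icc (0 : ℝ) T,
      HasDerivAt x
        (Real.sqrt (2 * E - 2 * g * (a * (x t) ^ 2 + b * (x t))) /
          Real.sqrt (1 + (2 * a * x t + b) ^ 2)) t) :
    T = ∫ ξ in (0 : ℝ)..x_f,
        Real.sqrt ((1 + (2 * a * ξ + b) ^ 2) / (2 * E - 2 * g * (a * ξ ^ 2 + b * ξ))) := by
  have hmono := monotoneOn_of_forall_hasDerivAt_nonneg (convex_Icc 0 T) hode
    fun t _ ↦ by positivity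
  have hmaps : MapsTo x (Icc 0 T) (Icc 0 x_f) := by simpa [hx0, hxT] using hmono.mapsTo_Icc
  rw [← uIcc_of_le hT.le] at hode hmaps
  have hv : Continuous fun ξ : ℝ ↦
      √(2 * E - 2 * g * (a * ξ ^ 2 + b * ξ)) / √(1 + (2 * a * ξ + b) ^ 2) := by
    fun_prop (disch := exact fun ξ ↦ (Real.sqrt_pos.2 (by positivity)).ne')
  have hf : ContinuousOn (fun ξ : ℝ ↦
      √((1 + (2 * a * ξ + b) ^ 2) / (2 * E - 2 * g * (a * ξ ^ 2 + b * ξ)))) (Icc 0 x_f) :=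
    ((by fun_prop : Continuous fun ξ : ℝ ↦ 1 + (2 * a * ξ + b) ^ 2).continuousOn.div
      (by fun_prop) fun ξ hξ ↦ (hpos ξ hξ).ne').sqrt
  have htime := integral_eq_sub_of_hasDerivAt_of_mul_eq_one hode hmaps hv.continuousOn hf
    fun ξ hξ ↦ Real.sqrt_div_mul_sqrt_div_eq_one (by positivity) (hpos ξ hξ)
  rw [hx0, hxT, sub_zero] at htime
  exact htime.symm

/-- **Manoeuvre time of the coasting bead on the quadratic path.**
If `x : [0,T] → ℝ` is differentiable with `x 0 = 0`, `x T = x_f` and satisfies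
`ẋ = √(2E − 2g·(a·x² + b·x)) / √(1 + (2a·x + b)²)`, and `2E − 2g·(aξ² + bξ) > 0` on
`[0, x_f]`, then the arrival time is
`T = ∫₀^{x_f} √((1+(2aξ+b)²)/(2E − 2g(aξ² + bξ))) dξ`. -/
theorem bead_arrival_time (a b g E x_f T : ℝ) (hx_f : 0 < x_f) (hT : 0 < T)
    (hpos : ∀ ξ ∈ Set.Icc (0 : ℝ) x_f, 0 < 2 * E - 2 * g * (a * ξ ^ 2 + b * ξ))
    (x : ℝ → ℝ) (hx0 : x 0 = 0) (hxT : x T = x_f)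
    (hode : ∀ t ∈ Set.Icc (0 : ℝ) T,
      HasDerivAt x
        (Real.sqrt (2 * E - 2 * g * (a * (x t) ^ 2 + b * (x t))) /
          Real.sqrt (1 + (2 * a * x t + b) ^ 2)) t) :
    T = ∫ ξ in (0 : ℝ)..x_f,
        Real.sqrt ((1 + (2 * a * ξ + b) ^ 2) / (2 * E - 2 * g * (a * ξ ^ 2 + b * ξ))) :=
  bead_arrival_time_general a b g E x_f T hT hpos x hx0 hxT hode
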